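/- arXiv:1102.2647 — 2 statements merged into one kernel-verified Lean document; each statement's English description precedes it below -/
import Mathlib

section
/- Let W : ℝ^{3×3} → [0,+∞] be Borel measurable, of class C² in a neighborhood of SO(3), frame indifferent (W(RF) = W(F) for all F ∈ ℝ^{3×3} and R ∈ SO(3)), with W(F) ≥ C_W dist²(F, SO(3)) for some C_W > 0 and W = 0 on SO(3). Define Q₃(F) = D²W(I)(F,F) and, for 2×2 matrices G, Q₂(G) = min_{a∈ℝ³} Q₃(Ĝ + a⊗e₃ + e₃⊗a), where Ĝ is G extended by zeros to 3×3. Then Q₃ and Q₂ are positive semi-definite quadratic forms that vanish on antisymmetric matrices and depend only on the symmetric part of their argument, i.e. Q₃(G) = Q₃(sym G) and Q₂(G) = Q₂(sym G); moreover both Q₃ and Q₂ are positive definite on symmetric matrices. -/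
open MeasureTheory Filter Matrix
open scoped Topology BigOperators

noncomputable section

abbrev M3 : Type := Fin 3 → Fin 3 → ℝ
abbrev M2 : Type := Fin 2 → Fin 2 → ℝ

/-- squared Frobenius norm of a (functional) matrix -/
def frobSq {m n : ℕ} (A : Fin m → Fin n → ℝ) : ℝ := ∑ i, ∑ j, (A i j) ^ 2

/-- Frobenius norm -/
def frob {m n : ℕ} (A : Fin m → Fin n → ℝ) : ℝ := Real.sqrt (frobSq A)

/-- the special orthogonal group `SO(n)`, as a set of (functional) matrices -/
def SOn (n : ℕ) : Set (Fin n → Fin n → ℝ) :=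
  {R | Matrix.of R * (Matrix.of R).transpose = 1 ∧ (Matrix.of R).det = 1}

/-- Frobenius distance to `SO(n)` -/
def distSO {n : ℕ} (F : Fin n → Fin n → ℝ) : ℝ :=
  sInf ((fun R => frob (F - R)) '' SOn n)

/-- gradient (Jacobian matrix) of a vector field -/
def grad {n m : ℕ} (y : (Fin n → ℝ) → (Fin m → ℝ)) (x : Fin n → ℝ) :
    Fin m → Fin n → ℝ := fun i j => fderiv ℝ y x (Pi.single j 1) i

/-- gradient of a scalar field -/
def gradS {n : ℕ} (v : (Fin n → ℝ) → ℝ) (x : Fin n → ℝ) : Fin n → ℝ :=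
  fun j => fderiv ℝ v x (Pi.single j 1)

/-- Hessian of a scalar field -/
def hess {n : ℕ} (v : (Fin n → ℝ) → ℝ) (x : Fin n → ℝ) : Fin n → Fin n → ℝ :=
  grad (gradS v) x

/-- gradient of a matrix field -/
def gradM {n m k : ℕ} (A : (Fin n → ℝ) → (Fin m → Fin k → ℝ)) (x : Fin n → ℝ) :
    Fin m → Fin k → Fin n → ℝ := fun i j l => fderiv ℝ A x (Pi.single l 1) i j

/-- L² norm of a scalar field on a set -/
def L2f {n : ℕ} (S : Set (Fin n → ℝ)) (f : (Fin n → ℝ) → ℝ) : ℝ :=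
  Real.sqrt (∫ x in S, (f x) ^ 2)

/-- L² norm of a vector field on a set -/
def L2v {n m : ℕ} (S : Set (Fin n → ℝ)) (y : (Fin n → ℝ) → (Fin m → ℝ)) : ℝ :=
  Real.sqrt (∫ x in S, ∑ i, (y x i) ^ 2)

/-- L² norm of a matrix field on a set -/
def L2m {n m k : ℕ} (S : Set (Fin n → ℝ)) (A : (Fin n → ℝ) → (Fin m → Fin k → ℝ)) : ℝ :=
  Real.sqrt (∫ x in S, frobSq (A x))

/-- Lᵖ norm of a matrix field on a set -/
def Lpm {n m k : ℕ} (p : ℝ) (S : Set (Fin n → ℝ)) (A : (Fin n → ℝ) → (Fin m → Fin k → ℝ)) : ℝ :=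
  (∫ x in S, (frob (A x)) ^ p) ^ (1 / p)

/-- L² norm of the gradient of a matrix field on a set -/
def L2gM {n m k : ℕ} (S : Set (Fin n → ℝ)) (A : (Fin n → ℝ) → (Fin m → Fin k → ℝ)) : ℝ :=
  Real.sqrt (∫ x in S, ∑ i, ∑ j, ∑ l, (gradM A x i j l) ^ 2)

/-- membership in `W^{1,2}(S; ℝ^m)` (differentiable representative with square
integrable function and gradient) -/
def MemW12 {n m : ℕ} (S : Set (Fin n → ℝ)) (y : (Fin n → ℝ) → (Fin m → ℝ)) : Prop :=
  (∀ x ∈ S, DifferentiableAt ℝ y x) ∧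
  Integrable (fun x => ∑ i, (y x i) ^ 2) (volume.restrict S) ∧
  Integrable (fun x => frobSq (grad y x)) (volume.restrict S)

/-- membership in `W^{1,2}(S)` (scalar) -/
def MemW12S {n : ℕ} (S : Set (Fin n → ℝ)) (v : (Fin n → ℝ) → ℝ) : Prop :=
  (∀ x ∈ S, DifferentiableAt ℝ v x) ∧
  Integrable (fun x => (v x) ^ 2) (volume.restrict S) ∧
  Integrable (fun x => ∑ j, (gradS v x j) ^ 2) (volume.restrict S)

/-- membership in `W^{2,2}(S)` (scalar) -/
def MemW22S {n : ℕ} (S : Set (Fin n → ℝ)) (v : (Fin n → ℝ) → ℝ) : Prop :=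
  MemW12S S v ∧ (∀ x ∈ S, DifferentiableAt ℝ (gradS v) x) ∧
  Integrable (fun x => frobSq (hess v x)) (volume.restrict S)

/-- membership in `W^{1,2}(S; ℝ^{m×k})` (matrix fields) -/
def MemW12M {n m k : ℕ} (S : Set (Fin n → ℝ)) (A : (Fin n → ℝ) → (Fin m → Fin k → ℝ)) : Prop :=
  (∀ x ∈ S, DifferentiableAt ℝ A x) ∧
  Integrable (fun x => frobSq (A x)) (volume.restrict S) ∧
  Integrable (fun x => ∑ i, ∑ j, ∑ l, (gradM A x i j l) ^ 2) (volume.restrict S)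

/-- weak convergence in `L²(S)` of a sequence of scalar fields -/
def WeakL2 {n : ℕ} (S : Set (Fin n → ℝ)) (F : ℕ → (Fin n → ℝ) → ℝ)
    (f : (Fin n → ℝ) → ℝ) : Prop :=
  ∀ g : (Fin n → ℝ) → ℝ, Integrable (fun x => (g x) ^ 2) (volume.restrict S) →
    Tendsto (fun k => ∫ x in S, F k x * g x) atTop (𝓝 (∫ x in S, f x * g x))

/-- strong convergence in `L²(S)` of scalar fields -/
def StrongL2 {n : ℕ} (S : Set (Fin n → ℝ)) (F : ℕ → (Fin n → ℝ) → ℝ)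
    (f : (Fin n → ℝ) → ℝ) : Prop :=
  Tendsto (fun k => L2f S (fun x => F k x - f x)) atTop (𝓝 0)

/-- strong convergence in `L²(S)` of matrix fields -/
def StrongL2m {n m k : ℕ} (S : Set (Fin n → ℝ))
    (F : ℕ → (Fin n → ℝ) → (Fin m → Fin k → ℝ))
    (G : (Fin n → ℝ) → (Fin m → Fin k → ℝ)) : Prop :=
  Tendsto (fun j => L2m S (fun x => F j x - G x)) atTop (𝓝 0)

/-- strong convergence in `Lᵖ(S)` of matrix fields -/
def StrongLpm {n m k : ℕ} (p : ℝ) (S : Set (Fin n → ℝ))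
    (F : ℕ → (Fin n → ℝ) → (Fin m → Fin k → ℝ))
    (G : (Fin n → ℝ) → (Fin m → Fin k → ℝ)) : Prop :=
  Tendsto (fun j => Lpm p S (fun x => F j x - G x)) atTop (𝓝 0)

/-- weak convergence in `W^{1,2}(S)` of scalar fields -/
def WeakW12S {n : ℕ} (S : Set (Fin n → ℝ)) (F : ℕ → (Fin n → ℝ) → ℝ)
    (f : (Fin n → ℝ) → ℝ) : Prop :=
  WeakL2 S F f ∧ ∀ j : Fin n, WeakL2 S (fun k x => gradS (F k) x j) (fun x => gradS f x j)

/-- strong convergence in `W^{1,2}(S)` of scalar fields -/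
def StrongW12S {n : ℕ} (S : Set (Fin n → ℝ)) (F : ℕ → (Fin n → ℝ) → ℝ)
    (f : (Fin n → ℝ) → ℝ) : Prop :=
  StrongL2 S F f ∧ ∀ j : Fin n, StrongL2 S (fun k x => gradS (F k) x j) (fun x => gradS f x j)

/-- weak convergence in `W^{1,2}(S; ℝ^m)` of vector fields -/
def WeakW12V {n m : ℕ} (S : Set (Fin n → ℝ)) (F : ℕ → (Fin n → ℝ) → (Fin m → ℝ))
    (f : (Fin n → ℝ) → (Fin m → ℝ)) : Prop :=
  (∀ i, WeakL2 S (fun k x => F k x i) (fun x => f x i)) ∧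
  (∀ i j, WeakL2 S (fun k x => grad (F k) x i j) (fun x => grad f x i j))

/-- matrix algebra helpers -/
def matId (n : ℕ) : Fin n → Fin n → ℝ := fun i j => if i = j then 1 else 0
def symM {n : ℕ} (A : Fin n → Fin n → ℝ) : Fin n → Fin n → ℝ := fun i j => (A i j + A j i) / 2
def transM {n m : ℕ} (A : Fin n → Fin m → ℝ) : Fin m → Fin n → ℝ := fun i j => A j i
def mulM {n : ℕ} (A B : Fin n → Fin n → ℝ) : Fin n → Fin n → ℝ := fun i j => ∑ k, A i k * B k j
def applyM {n : ℕ} (A : Fin n → Fin n → ℝ) (v : Fin n → ℝ) : Fin n → ℝ := fun i => ∑ j, A i j * v j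
def outer {n m : ℕ} (a : Fin n → ℝ) (b : Fin m → ℝ) : Fin n → Fin m → ℝ := fun i j => a i * b j
def e3 : Fin 3 → ℝ := ![0, 0, 1]
def ext23 (G : M2) : M3 := fun i j =>
  if hi : (i : ℕ) < 2 then (if hj : (j : ℕ) < 2 then G ⟨i, hi⟩ ⟨j, hj⟩ else 0) else 0
def det2 (A : M2) : ℝ := A 0 0 * A 1 1 - A 0 1 * A 1 0
def g3 (v : (Fin 2 → ℝ) → ℝ) (x' : Fin 2 → ℝ) : Fin 3 → ℝ := ![gradS v x' 0, gradS v x' 1, 0]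

/-- geometry of the shallow shell -/
def xp (x : Fin 3 → ℝ) : Fin 2 → ℝ := ![x 0, x 1]
def emb (x' : Fin 2 → ℝ) (t : ℝ) : Fin 3 → ℝ := ![x' 0, x' 1, t]
def pd {n : ℕ} (i : Fin n) (θ : (Fin n → ℝ) → ℝ) (x : Fin n → ℝ) : ℝ :=
  fderiv ℝ θ x (Pi.single i 1)
def alphaSh (θ : (Fin 2 → ℝ) → ℝ) (f : ℝ) (x' : Fin 2 → ℝ) : ℝ :=
  1 + f ^ 2 * ((pd 0 θ x') ^ 2 + (pd 1 θ x') ^ 2)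
def a3Sh (θ : (Fin 2 → ℝ) → ℝ) (f : ℝ) (x' : Fin 2 → ℝ) : Fin 3 → ℝ :=
  (Real.sqrt (alphaSh θ f x'))⁻¹ • ![-(f * pd 0 θ x'), -(f * pd 1 θ x'), 1]
def ThetaSh (θ : (Fin 2 → ℝ) → ℝ) (f : ℝ) (x : Fin 3 → ℝ) : Fin 3 → ℝ :=
  ![x 0, x 1, f * θ (xp x)] + x 2 • a3Sh θ f (xp x)
def Ph (h : ℝ) (x : Fin 3 → ℝ) : Fin 3 → ℝ := ![x 0, x 1, 2 * h * x 2]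
def cyl (ω : Set (Fin 2 → ℝ)) (a b : ℝ) : Set (Fin 3 → ℝ) :=
  {x | xp x ∈ ω ∧ x 2 ∈ Set.Ioo a b}
def cylC (ω : Set (Fin 2 → ℝ)) (a b : ℝ) : Set (Fin 3 → ℝ) :=
  {x | xp x ∈ closure ω ∧ x 2 ∈ Set.Icc a b}
def Om (ω : Set (Fin 2 → ℝ)) : Set (Fin 3 → ℝ) := cyl ω (-(2⁻¹ : ℝ)) 2⁻¹
def hatOm (ω : Set (Fin 2 → ℝ)) (θ : (Fin 2 → ℝ) → ℝ) (f hh : ℝ) : Set (Fin 3 → ℝ) :=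
  ThetaSh θ f '' cyl ω (-hh) hh
def Cmat (θ : (Fin 2 → ℝ) → ℝ) (x' : Fin 2 → ℝ) : M3 :=
  ![![0, 0, pd 0 θ x'], ![0, 0, pd 1 θ x'], ![-(pd 0 θ x'), -(pd 1 θ x'), 0]]

/-- a (pragmatic) notion of bounded Lipschitz domain -/
def IsLipschitzDomain {n : ℕ} (U : Set (Fin n → ℝ)) : Prop :=
  IsOpen U ∧ Bornology.IsBounded U ∧ U.Nonempty ∧ IsConnected U

/-- assumptions on the stored energy density -/
structure StoredEnergyHyp (W : M3 → ℝ) : Prop where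
  nonneg : ∀ F, 0 ≤ W F
  smooth : ∃ U : Set M3, IsOpen U ∧ SOn 3 ⊆ U ∧ ContDiffOn ℝ 2 W U
  frame : ∀ (F R : M3), R ∈ SOn 3 → W (mulM R F) = W F
  coer : ∃ Cw > 0, ∀ F, Cw * (distSO F) ^ 2 ≤ W F
  zero : ∀ R ∈ SOn 3, W R = 0

/-- the quadratic form `Q₃(F) = D²W(I)(F,F)` -/
def Q3 (W : M3 → ℝ) (F : M3) : ℝ := iteratedFDeriv ℝ 2 W (matId 3) (fun _ => F)

/-- the relaxed quadratic form `Q₂` -/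
def Q2 (W : M3 → ℝ) (G : M2) : ℝ :=
  sInf (Set.range fun a : Fin 3 → ℝ => Q3 W (ext23 G + outer a e3 + outer e3 a))

/-- the (rescaled) elastic energy `I^h` -/
def Ih (W : M3 → ℝ) (ω : Set (Fin 2 → ℝ)) (θ : (Fin 2 → ℝ) → ℝ) (f hh : ℝ)
    (y : (Fin 3 → ℝ) → Fin 3 → ℝ) : ℝ :=
  (1 / hh) * ∫ x in hatOm ω θ f hh, W (grad y x)

/-- the Marguerre–von Kármán membrane strain -/
def strainMvK (u : (Fin 2 → ℝ) → Fin 2 → ℝ) (v θ : (Fin 2 → ℝ) → ℝ) (x' : Fin 2 → ℝ) : M2 :=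
  grad u x' + transM (grad u x') + outer (gradS v x') (gradS v x')
    + outer (gradS v x') (gradS θ x') + outer (gradS θ x') (gradS v x')

/-- the linearized Marguerre–von Kármán membrane strain -/
def strainL (u : (Fin 2 → ℝ) → Fin 2 → ℝ) (v θ : (Fin 2 → ℝ) → ℝ) (x' : Fin 2 → ℝ) : M2 :=
  grad u x' + transM (grad u x')
    + outer (gradS v x') (gradS θ x') + outer (gradS θ x') (gradS v x')

/-- the Marguerre–von Kármán functional -/
def IMvK (W : M3 → ℝ) (ω : Set (Fin 2 → ℝ)) (θ : (Fin 2 → ℝ) → ℝ)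
    (u : (Fin 2 → ℝ) → Fin 2 → ℝ) (v : (Fin 2 → ℝ) → ℝ) : ℝ :=
  ∫ x' in ω, ((1/2) * Q2 W ((2⁻¹ : ℝ) • strainMvK u v θ x') + (1/24) * Q2 W (hess v x'))

/-- the linearized Marguerre–von Kármán functional -/
def ILMvK (W : M3 → ℝ) (ω : Set (Fin 2 → ℝ)) (θ : (Fin 2 → ℝ) → ℝ)
    (u : (Fin 2 → ℝ) → Fin 2 → ℝ) (v : (Fin 2 → ℝ) → ℝ) : ℝ :=
  ∫ x' in ω, ((1/2) * Q2 W ((2⁻¹ : ℝ) • strainL u v θ x') + (1/24) * Q2 W (hess v x'))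

/-- the averaged in-plane displacement `U^h` -/
def Uavg (θ : (Fin 2 → ℝ) → ℝ) (f hh : ℝ) (y : (Fin 3 → ℝ) → Fin 3 → ℝ)
    (x' : Fin 2 → ℝ) : Fin 2 → ℝ :=
  fun i => ∫ t in Set.Ioo (-(2⁻¹ : ℝ)) 2⁻¹, (y (ThetaSh θ f (Ph hh (emb x' t))) i.castSucc - x' i)

/-- the averaged out-of-plane displacement `V^h` -/
def Vavg (θ : (Fin 2 → ℝ) → ℝ) (f hh : ℝ) (y : (Fin 3 → ℝ) → Fin 3 → ℝ)
    (x' : Fin 2 → ℝ) : ℝ :=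
  ∫ t in Set.Ioo (-(2⁻¹ : ℝ)) 2⁻¹, (y (ThetaSh θ f (Ph hh (emb x' t))) 2 - f * θ x')

/-- the action of the normal force on a rotated configuration -/
def act3 (S : Set (Fin 3 → ℝ)) (g : (Fin 3 → ℝ) → ℝ) (Q : M3) : ℝ :=
  ∫ x in S, g x * ∑ j, Q 2 j * x j

/-- `m^h`, the maximized action of the force over rotations -/
def mMax (S : Set (Fin 3 → ℝ)) (g : (Fin 3 → ℝ) → ℝ) : ℝ := sSup (act3 S g '' SOn 3)

/-- the total energy `J^h` -/
def Jh (W : M3 → ℝ) (ω : Set (Fin 2 → ℝ)) (θ : (Fin 2 → ℝ) → ℝ) (f hh : ℝ)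
    (g : (Fin 3 → ℝ) → ℝ) (y : (Fin 3 → ℝ) → Fin 3 → ℝ) : ℝ :=
  Ih W ω θ f hh y - (1/hh) * (∫ x in hatOm ω θ f hh, g x * y x 2)
    + mMax (hatOm ω θ f hh) g / hh

/-- the relaxation functional `r` -/
def relax (ω : Set (Fin 2 → ℝ)) (θ : (Fin 2 → ℝ) → ℝ) (h E f : ℕ → ℝ)
    (g : ℕ → (Fin 3 → ℝ) → ℝ) (Q : M3) : EReal :=
  sInf {t : EReal | ∃ Qs : ℕ → M3, (∀ n, Qs n ∈ SOn 3) ∧ Tendsto Qs atTop (𝓝 Q) ∧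
    t = Filter.liminf (fun n =>
      (((1/(h n * E n)) * (mMax (hatOm ω θ (f n) (h n)) (g n)
        - act3 (hatOm ω θ (f n) (h n)) (g n) (Qs n))) : EReal)) atTop}

/-- the limit functional `J⁰` -/
def J0E (W : M3 → ℝ) (ω : Set (Fin 2 → ℝ)) (θ : (Fin 2 → ℝ) → ℝ)
    (rfun : M3 → EReal) (f3 : (Fin 3 → ℝ) → ℝ)
    (u : (Fin 2 → ℝ) → Fin 2 → ℝ) (v : (Fin 2 → ℝ) → ℝ) (Rb : M3) : EReal :=
  ((IMvK W ω θ u v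
    - Rb 2 2 * ∫ x' in ω, (∫ t in Set.Ioo (-(2⁻¹ : ℝ)) 2⁻¹, f3 (emb x' t)) * v x' : ℝ) : EReal)
    + rfun Rb

/-- the linearized limit functional `J⁰_L` -/
def J0LE (W : M3 → ℝ) (ω : Set (Fin 2 → ℝ)) (θ : (Fin 2 → ℝ) → ℝ)
    (rfun : M3 → EReal) (f3 : (Fin 3 → ℝ) → ℝ)
    (u : (Fin 2 → ℝ) → Fin 2 → ℝ) (v : (Fin 2 → ℝ) → ℝ) (Rb : M3) : EReal :=
  ((ILMvK W ω θ u v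
    - Rb 2 2 * ∫ x' in ω, (∫ t in Set.Ioo (-(2⁻¹ : ℝ)) 2⁻¹, f3 (emb x' t)) * v x' : ℝ) : EReal)
    + rfun Rb

/-- the geometric rigidity property with constant `C` on a domain `U` -/
def Rigidity (m : ℕ) (C : ℝ) (U : Set (Fin m → ℝ)) : Prop :=
  ∀ v : (Fin m → ℝ) → (Fin m → ℝ), MemW12 U v →
    ∃ R ∈ SOn m, L2m U (fun x => grad v x - R) ≤ C * L2f U (fun x => distSO (grad v x))

/-! The form `Q₃ = D²W(I)` is symmetric, and nonnegative because `I` minimizes `W`.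
Since `DW` vanishes on `SO(3)`, differentiating it along `t ↦ exp (t A) ∈ SO(3)` gives
`D²W(I)(A, ·) = 0` for skew `A`, so `Q₃` only sees `sym F`. For symmetric `F` one has
`dist(I + tF, SO(3)) ≥ t|F|/4` for small `t`, and the growth condition together with a second
order Taylor expansion yields `Q₃(F) ≥ C_W |F|²/8`.
`Q₂(G)` is the minimum of `Q₃` over the affine space `Ĝ + {a ⊗ e₃ + e₃ ⊗ a}`, whose direction
consists of symmetric matrices; there `Q₃` is positive definite, so the minimizer is the
`Q₃`-orthogonal projection of `Ĝ` onto the orthogonal complement of that direction, which is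
linear in `G`, and all properties of `Q₃` pass to `Q₂`. -/

open scoped Matrix

theorem LinearMap.BilinForm.exists_linear_isLeast_add_range {E F : Type*} [AddCommGroup E]
    [Module ℝ E] [FiniteDimensional ℝ E] [AddCommGroup F] [Module ℝ F]
    (B : LinearMap.BilinForm ℝ E) (hB : B.IsSymm) (L : F →ₗ[ℝ] E)
    (hL : ∀ a, L a ≠ 0 → 0 < B (L a) (L a)) :
    ∃ q : E →ₗ[ℝ] E, ∀ x, (∃ a, q x = x + L a) ∧
      IsLeast (Set.range fun a => B (x + L a) (x + L a)) (B (q x) (q x)) := by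
  have hnonneg : ∀ a, 0 ≤ B (L a) (L a) := fun a => by
    by_cases h : L a = 0
    · simp [h]
    · exact (hL a h).le
  have hcompl : IsCompl (B.orthogonal (range L)) (range L) := by
    refine ((B.isCompl_orthogonal_iff_disjoint hB.isRefl).2 ?_).symm
    refine Submodule.disjoint_def.2 fun v hv hv' => ?_
    obtain ⟨a, rfl⟩ := hv
    by_contra h
    exact (hL a h).ne' (hv' _ ⟨a, rfl⟩)
  refine ⟨(B.orthogonal (range L)).projection (range L) hcompl, fun x => ?_⟩
  set y := (B.orthogonal (range L)).projection (range L) hcompl x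
  have hy : y ∈ B.orthogonal (range L) := Submodule.projection_apply_mem hcompl x
  obtain ⟨a₀, ha₀⟩ : x - y ∈ range L := Submodule.sub_projection_mem hcompl x
  have hyx : y = x + L (-a₀) := by rw [map_neg, ha₀]; abel
  refine ⟨⟨-a₀, hyx⟩, ⟨-a₀, by simp only [← hyx]⟩, ?_⟩
  rintro _ ⟨a, rfl⟩
  have hsplit : x + L a = y + L (a₀ + a) := by rw [map_add, ha₀]; abel
  have horth : B (L (a₀ + a)) y = 0 := hy _ ⟨_, rfl⟩
  have horth' : B y (L (a₀ + a)) = 0 := by rw [← hB.eq]; exact horth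
  show _ ≤ B (x + L a) (x + L a)
  rw [hsplit, map_add B, LinearMap.add_apply, map_add (B y), map_add (B _), horth, horth']
  linarith [hnonneg (a₀ + a)]

theorem LinearMap.BilinForm.apply_add_add_of_eq_zero {E : Type*} [AddCommGroup E] [Module ℝ E]
    {B : LinearMap.BilinForm ℝ E} (hB : B.IsSymm) {A : E} (hA : B A = 0) (S : E) :
    B (S + A) (S + A) = B S S := by
  rw [map_add B, hA, add_zero, map_add, ← hB.eq A S, hA, LinearMap.zero_apply, add_zero]

section Frobenius

variable {m n : ℕ}

def frobInner (A B : Matrix (Fin m) (Fin n) ℝ) : ℝ := ∑ i, ∑ j, A i j * B i j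

theorem frobSq_nonneg (A : Matrix (Fin m) (Fin n) ℝ) : 0 ≤ frobSq A := by
  unfold frobSq; positivity

theorem sq_frob (A : Matrix (Fin m) (Fin n) ℝ) : frob A ^ 2 = frobSq A :=
  Real.sq_sqrt (frobSq_nonneg A)

theorem frob_pos {A : Matrix (Fin m) (Fin n) ℝ} (hA : A ≠ 0) : 0 < frob A := by
  refine Real.sqrt_pos.2 ((frobSq_nonneg A).lt_of_ne fun h => hA ?_)
  have hrow := (Finset.sum_eq_zero_iff_of_nonneg fun i _ => by positivity).1 h.symm
  ext i j
  exact pow_eq_zero_iff two_ne_zero |>.1 <|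
    (Finset.sum_eq_zero_iff_of_nonneg fun j _ => by positivity).1 (hrow i (Finset.mem_univ _)) j
      (Finset.mem_univ _)

theorem frobSq_smul (t : ℝ) (A : Matrix (Fin m) (Fin n) ℝ) :
    frobSq (t • A) = t ^ 2 * frobSq A := by
  simp only [frobSq, Finset.mul_sum, Matrix.smul_apply, smul_eq_mul, mul_pow]

theorem frobSq_sub_le (A B : Matrix (Fin m) (Fin n) ℝ) :
    frobSq (A - B) ≤ 2 * frobSq A + 2 * frobSq B := by
  simp only [frobSq, Finset.mul_sum, ← Finset.sum_add_distrib, Matrix.sub_apply]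
  gcongr with i _ j _
  nlinarith [sq_nonneg (A i j + B i j)]

theorem abs_frobInner_le (A B : Matrix (Fin m) (Fin n) ℝ) :
    |frobInner A B| ≤ frob A * frob B := by
  refine abs_le_of_sq_le_sq' ?_ (by unfold frob; positivity) |>.elim
    fun h1 h2 => abs_le.2 ⟨h1, h2⟩
  rw [mul_pow, sq_frob, sq_frob]
  simpa [frobInner, frobSq, Fintype.sum_prod_type] using
    Finset.sum_mul_sq_le_sq_mul_sq Finset.univ (fun p : Fin m × Fin n => A p.1 p.2)
      (fun p => B p.1 p.2)

theorem frobSq_transpose_mul_self_le (A : Matrix (Fin m) (Fin n) ℝ) :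
    frobSq (Aᵀ * A) ≤ frobSq A ^ 2 := by
  have hcol : ∑ i, ∑ k, A k i ^ 2 = frobSq A := Finset.sum_comm
  calc frobSq (Aᵀ * A) ≤ ∑ i, ∑ j, (∑ k, A k i ^ 2) * (∑ k, A k j ^ 2) := by
        unfold frobSq
        gcongr with i _ j _
        simpa [Matrix.mul_apply] using Finset.sum_mul_sq_le_sq_mul_sq _ _ _
    _ = frobSq A ^ 2 := by rw [← Finset.sum_mul_sum, hcol, sq]

theorem frobInner_sub_transpose_eq_zero (A F : Matrix (Fin n) (Fin n) ℝ) (hF : Fᵀ = F) :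
    frobInner (A - Aᵀ) F = 0 := by
  have hswap : ∑ i, ∑ j, A j i * F i j = ∑ i, ∑ j, A i j * F i j := by
    rw [Finset.sum_comm]
    refine Finset.sum_congr rfl fun i _ => Finset.sum_congr rfl fun j _ => ?_
    rw [← congr_fun₂ hF i j, Matrix.transpose_apply]
  simp only [frobInner, Matrix.sub_apply, Matrix.transpose_apply, sub_mul,
    Finset.sum_sub_distrib, hswap, sub_self]

theorem mul_frob_le_frob_sub_add_sq {F R : Matrix (Fin n) (Fin n) ℝ} (hF : Fᵀ = F)
    (hR : Rᵀ * R = 1) (t : ℝ) :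
    t * frob F ≤ frob (1 + t • F - R) + (t * frob F) ^ 2 + frob (1 + t • F - R) ^ 2 := by
  set D := 1 + t • F - R
  set E := R - 1
  have hφ : 0 ≤ frob F := Real.sqrt_nonneg _
  have hd : 0 ≤ frob D := Real.sqrt_nonneg _
  -- `t • F = D + E`, and `2 E + Eᵀ E = R - Rᵀ` is skew, hence orthogonal to `F`
  have hsplit : t * frobSq F = frobInner D F + frobInner E F := by
    simp only [frobSq, frobInner, D, E, Finset.mul_sum, ← Finset.sum_add_distrib]
    refine Finset.sum_congr rfl fun i _ => Finset.sum_congr rfl fun j _ => ?_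
    simp only [Matrix.add_apply, Matrix.sub_apply, Matrix.smul_apply, smul_eq_mul]
    ring
  have hskew : 2 * frobInner E F + frobInner (Eᵀ * E) F = 0 := by
    have hE : (2 : ℝ) • E + Eᵀ * E = R - Rᵀ := by
      simp only [E, Matrix.transpose_sub, Matrix.transpose_one, sub_mul, mul_sub, hR, mul_one,
        one_mul, two_smul]
      abel
    rw [← frobInner_sub_transpose_eq_zero R F hF, ← hE]
    simp only [frobInner, Matrix.add_apply, Matrix.smul_apply, add_mul, Finset.sum_add_distrib,
      Finset.mul_sum, smul_eq_mul, mul_assoc]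
  have hgram : |frobInner (Eᵀ * E) F| ≤ frobSq E * frob F := by
    refine (abs_frobInner_le _ _).trans (mul_le_mul_of_nonneg_right ?_ hφ)
    exact Real.sqrt_le_iff.2 ⟨frobSq_nonneg E, frobSq_transpose_mul_self_le E⟩
  have hE : frobSq E ≤ 2 * (t * frob F) ^ 2 + 2 * frob D ^ 2 := by
    have : E = t • F - D := by simp only [D, E]; abel
    rw [this, mul_pow, sq_frob F, sq_frob D, ← frobSq_smul]
    exact frobSq_sub_le _ _
  have hDF := abs_frobInner_le D F
  have key : t * frob F * frob F ≤ (frob D + (t * frob F) ^ 2 + frob D ^ 2) * frob F := by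
    rw [mul_assoc, ← sq, sq_frob F, hsplit]
    nlinarith [abs_le.1 hDF, abs_le.1 hgram]
  change t * frob F ≤ frob D + (t * frob F) ^ 2 + frob D ^ 2
  rcases hφ.eq_or_lt with h0 | hpos
  · rw [← h0]; nlinarith [sq_nonneg (frob D)]
  · exact le_of_mul_le_mul_right key hpos

theorem mul_frob_div_four_le_frob_sub {F R : Matrix (Fin n) (Fin n) ℝ} (hF : Fᵀ = F)
    (hR : Rᵀ * R = 1) {t : ℝ} (ht : 0 ≤ t) (hsmall : t * frob F ≤ 1 / 2) :
    t * frob F / 4 ≤ frob (1 + t • F - R) := by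
  have key := mul_frob_le_frob_sub_add_sq hF hR t
  have hs : 0 ≤ t * frob F := mul_nonneg ht (Real.sqrt_nonneg _)
  have hd : 0 ≤ frob (1 + t • F - R) := Real.sqrt_nonneg _
  by_contra! h
  nlinarith [mul_nonneg hd (sub_nonneg.2 h.le), mul_nonneg hs (sub_nonneg.2 hsmall)]

end Frobenius

theorem matId_eq_one (n : ℕ) : matId n = (1 : Matrix (Fin n) (Fin n) ℝ) := by
  ext i j
  simp [matId, Matrix.one_apply]

theorem matId_mem_SOn (n : ℕ) : matId n ∈ SOn n := by
  rw [matId_eq_one]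
  show (1 : Matrix (Fin n) (Fin n) ℝ) * 1ᵀ = 1 ∧ (1 : Matrix (Fin n) (Fin n) ℝ).det = 1
  simp

theorem mul_frob_div_four_le_distSO {n : ℕ} {F : Fin n → Fin n → ℝ}
    (hF : ∀ i j, F j i = F i j) {t : ℝ} (ht : 0 ≤ t) (hsmall : t * frob F ≤ 1 / 2) :
    t * frob F / 4 ≤ distSO (matId n + t • F) := by
  refine le_csInf ⟨_, _, matId_mem_SOn n, rfl⟩ ?_
  rintro _ ⟨R, hR, rfl⟩
  rw [matId_eq_one]
  exact mul_frob_div_four_le_frob_sub (F := Matrix.of F) (funext₂ hF) (mul_eq_one_comm.1 hR.1) ht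
    hsmall

open NormedSpace in
theorem exp_mem_SOn {n : ℕ} (A : Matrix (Fin n) (Fin n) ℝ) (hA : Aᵀ = -A) : exp A ∈ SOn n := by
  have horth : exp A * (exp A)ᵀ = 1 := by
    rw [← Matrix.exp_transpose, hA, ← Matrix.exp_add_of_commute _ _ (Commute.refl A).neg_right,
      add_neg_cancel, exp_zero]
  refine ⟨horth, ?_⟩
  have hsq : (exp A).det ^ 2 = 1 := by
    simpa [Matrix.det_mul, Matrix.det_transpose, sq] using congrArg Matrix.det horth
  have hnonneg : 0 ≤ (exp A).det := by
    have hhalf : A = (2⁻¹ : ℝ) • A + (2⁻¹ : ℝ) • A := by rw [← add_smul]; norm_num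
    rw [hhalf, Matrix.exp_add_of_commute _ _ (Commute.refl _), Matrix.det_mul]
    exact mul_self_nonneg _
  show (exp A).det = 1
  nlinarith

open NormedSpace in
open scoped Matrix.Norms.Operator in
theorem exists_curve_SOn_hasDerivAt {n : ℕ} (A : Fin n → Fin n → ℝ)
    (hA : ∀ i j, A j i = -A i j) :
    ∃ c : ℝ → Fin n → Fin n → ℝ, (∀ t, c t ∈ SOn n) ∧ c 0 = matId n ∧ HasDerivAt c A 0 := by
  have hskew : ∀ t : ℝ, (t • Matrix.of A)ᵀ = -(t • Matrix.of A) := fun t => by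
    ext i j; simp [hA i j]
  have h := hasDerivAt_exp_smul_const (𝕂 := ℝ) (Matrix.of A) 0
  rw [zero_smul, exp_zero, one_mul] at h
  -- the derivative is computed for the operator norm and transported to the sup norm
  let e : Matrix (Fin n) (Fin n) ℝ →L[ℝ] (Fin n → Fin n → ℝ) :=
    LinearMap.toContinuousLinearMap LinearMap.id
  refine ⟨fun t => e (exp (t • Matrix.of A)), fun t => exp_mem_SOn _ (hskew t), ?_,
    e.hasFDerivAt.comp_hasDerivAt 0 h⟩
  simp only [zero_smul, exp_zero, matId_eq_one]
  rfl

section SecondOrder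

variable {E : Type*} [NormedAddCommGroup E] [NormedSpace ℝ E]

theorem le_half_fderiv_fderiv_of_sq_le {f : E → ℝ} {x w : E} (hf : ContDiffAt ℝ 2 f x)
    (hf' : fderiv ℝ f x = 0) {c : ℝ}
    (hc : ∀ᶠ t in 𝓝[>] 0, c * t ^ 2 ≤ f (x + t • w) - f x) :
    c ≤ fderiv ℝ (fderiv ℝ f) x w w / 2 := by
  obtain ⟨r, hr, hdiff⟩ := Metric.eventually_nhds_iff_ball.1
    ((hf.eventually (by simp)).mono fun y hy => (hy.differentiableAt two_ne_zero).hasFDerivAt)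
  have hf'' : HasFDerivAt (fderiv ℝ f) (fderiv ℝ (fderiv ℝ f) x) x :=
    ((hf.fderiv_right (m := 1) le_rfl).differentiableAt one_ne_zero).hasFDerivAt
  -- Taylor's formula is applied along `l • w`, which is short enough to stay in the ball
  set l := r / (2 * (‖w‖ + 1))
  have hl0 : 0 < l := by positivity
  have hlw : x + l • w ∈ Metric.ball x r := by
    rw [Metric.mem_ball, dist_self_add_left, norm_smul, Real.norm_of_nonneg hl0.le,
      div_mul_eq_mul_div, div_lt_iff₀ (by positivity)]
    nlinarith [norm_nonneg w]
  have hx : x ∈ Metric.ball x r := Metric.mem_ball_self hr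
  have htaylor := (convex_ball x r).taylor_approx_two_segment (v := 0) (w := l • w)
    (fun y hy => hdiff y (interior_subset hy)) hx hf''.hasFDerivWithinAt
    (by simpa [Metric.isOpen_ball.interior_eq] using hx)
    (by simpa [Metric.isOpen_ball.interior_eq] using hlw)
  have hscale : Tendsto (fun t : ℝ => l * t) (𝓝[>] 0) (𝓝[>] 0) := by
    refine tendsto_nhdsWithin_of_tendsto_nhds_of_eventually_within _ ?_
      (eventually_nhdsWithin_of_forall fun t ht => mul_pos hl0 ht)
    simpa using ((continuous_const_mul l).tendsto 0).mono_left nhdsWithin_le_nhds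
  have hbound : ∀ᶠ t in 𝓝[>] (0 : ℝ), (c - fderiv ℝ (fderiv ℝ f) x w w / 2) * l ^ 2 ≤
      (f (x + t • (0 : E) + t • l • w) - f (x + t • (0 : E)) - t • fderiv ℝ f x (l • w)
        - t ^ 2 • fderiv ℝ (fderiv ℝ f) x 0 (l • w)
        - (t ^ 2 / 2) • fderiv ℝ (fderiv ℝ f) x (l • w) (l • w)) / t ^ 2 := by
    filter_upwards [hscale.eventually hc, self_mem_nhdsWithin] with t ht ht0
    simp only [smul_zero, add_zero, hf', map_zero, _root_.zero_apply, smul_eq_mul,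
      map_smul, _root_.smul_apply, smul_smul, mul_comm t l] at ht ⊢
    rw [le_div_iff₀ (pow_pos ht0 2)]
    nlinarith
  have := ge_of_tendsto htaylor.tendsto_div_nhds_zero hbound
  nlinarith [pow_pos hl0 2]

theorem IsLocalMin.fderiv_fderiv_apply_self_nonneg {f : E → ℝ} {x : E} (h : IsLocalMin f x)
    (hf : ContDiffAt ℝ 2 f x) (w : E) : 0 ≤ fderiv ℝ (fderiv ℝ f) x w w := by
  have hline : Tendsto (fun t : ℝ => x + t • w) (𝓝[>] 0) (𝓝 x) :=
    ((continuous_const.add (continuous_id.smul continuous_const)).tendsto' 0 x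
      (by simp)).mono_left nhdsWithin_le_nhds
  have := le_half_fderiv_fderiv_of_sq_le hf h.fderiv_eq_zero (c := 0) (w := w)
    ((hline.eventually h).mono fun t ht => by simpa using ht)
  linarith

theorem fderiv_fderiv_apply_eq_zero_of_isLocalMin_curve {f : E → ℝ} {c : ℝ → E} {v : E}
    (hmin : ∀ t, IsLocalMin f (c t)) (hc : HasDerivAt c v 0)
    (hf : DifferentiableAt ℝ (fderiv ℝ f) (c 0)) : fderiv ℝ (fderiv ℝ f) (c 0) v = 0 := by
  have hcomp := hf.hasFDerivAt.comp_hasDerivAt 0 hc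
  have hzero : fderiv ℝ f ∘ c = fun _ => 0 := funext fun t => (hmin t).fderiv_eq_zero
  rw [hzero] at hcomp
  exact hcomp.unique (hasDerivAt_const 0 0)

end SecondOrder

def hessForm (W : M3 → ℝ) : LinearMap.BilinForm ℝ M3 :=
  (fderiv ℝ (fderiv ℝ W) (matId 3)).toLinearMap₁₂

theorem Q3_eq_hessForm (W : M3 → ℝ) (F : M3) : Q3 W F = hessForm W F F :=
  iteratedFDeriv_two_apply W (matId 3) (fun _ => F)

theorem skew_sub_symM {n : ℕ} (F : Fin n → Fin n → ℝ) (i j : Fin n) :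
    (F - symM F) j i = -(F - symM F) i j := by
  simp only [Pi.sub_apply, symM]
  ring

namespace StoredEnergyHyp

variable {W : M3 → ℝ} (hW : StoredEnergyHyp W)
include hW

theorem isLocalMin {R : M3} (hR : R ∈ SOn 3) : IsLocalMin W R :=
  Filter.Eventually.of_forall fun F => (hW.zero R hR).trans_le (hW.nonneg F)

theorem contDiffAt {R : M3} (hR : R ∈ SOn 3) : ContDiffAt ℝ 2 W R := by
  obtain ⟨U, hUo, hSU, hW2⟩ := hW.smooth
  exact hW2.contDiffAt (hUo.mem_nhds (hSU hR))

theorem hessForm_isSymm : (hessForm W).IsSymm :=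
  ⟨(hW.contDiffAt (matId_mem_SOn 3)).isSymmSndFDerivAt (by simp)⟩

theorem hessForm_nonneg (F : M3) : 0 ≤ hessForm W F F :=
  (hW.isLocalMin (matId_mem_SOn 3)).fderiv_fderiv_apply_self_nonneg
    (hW.contDiffAt (matId_mem_SOn 3)) F

theorem hessForm_eq_zero_of_skew {A : M3} (hA : ∀ i j, A j i = -A i j) : hessForm W A = 0 := by
  obtain ⟨c, hcS, hc0, hc⟩ := exists_curve_SOn_hasDerivAt A hA
  have hdiff : DifferentiableAt ℝ (fderiv ℝ W) (c 0) := by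
    rw [hc0]
    exact ((hW.contDiffAt (matId_mem_SOn 3)).fderiv_right (m := 1) le_rfl).differentiableAt
      one_ne_zero
  have h := fderiv_fderiv_apply_eq_zero_of_isLocalMin_curve
    (fun t => hW.isLocalMin (hcS t)) hc hdiff
  rw [hc0] at h
  refine LinearMap.ext fun F => ?_
  show fderiv ℝ (fderiv ℝ W) (matId 3) A F = 0
  rw [h, _root_.zero_apply]

theorem hessForm_pos {F : M3} (hF : ∀ i j, F j i = F i j) (hne : F ≠ 0) :
    0 < hessForm W F F := by
  obtain ⟨Cw, hCw, hcoer⟩ := hW.coer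
  have hφ : 0 < frob F := frob_pos hne
  have hc : ∀ᶠ t in 𝓝[>] (0 : ℝ),
      Cw * frob F ^ 2 / 16 * t ^ 2 ≤ W (matId 3 + t • F) - W (matId 3) := by
    filter_upwards [Ioo_mem_nhdsGT (show 0 < 1 / (2 * frob F) by positivity)] with t ⟨ht0, ht⟩
    have hsmall : t * frob F ≤ 1 / 2 := by
      rw [lt_div_iff₀ (by positivity)] at ht
      linarith
    have hdist := mul_frob_div_four_le_distSO hF ht0.le hsmall
    rw [hW.zero _ (matId_mem_SOn 3), sub_zero]
    calc Cw * frob F ^ 2 / 16 * t ^ 2 = Cw * (t * frob F / 4) ^ 2 := by ring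
      _ ≤ Cw * distSO (matId 3 + t • F) ^ 2 := by gcongr
      _ ≤ W (matId 3 + t • F) := hcoer _
  have := le_half_fderiv_fderiv_of_sq_le (hW.contDiffAt (matId_mem_SOn 3))
    (hW.isLocalMin (matId_mem_SOn 3)).fderiv_eq_zero hc
  have : 0 < Cw * frob F ^ 2 / 16 := by positivity
  show 0 < fderiv ℝ (fderiv ℝ W) (matId 3) F F
  linarith

theorem Q3_eq_zero_of_skew {F : M3} (hF : ∀ i j, F j i = -F i j) : Q3 W F = 0 := by
  rw [Q3_eq_hessForm, hW.hessForm_eq_zero_of_skew hF, LinearMap.zero_apply]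

theorem Q3_symM (F : M3) : Q3 W F = Q3 W (symM F) := by
  rw [Q3_eq_hessForm, Q3_eq_hessForm, ← (hessForm W).apply_add_add_of_eq_zero hW.hessForm_isSymm
    (hW.hessForm_eq_zero_of_skew (skew_sub_symM F)) (symM F), add_sub_cancel]

end StoredEnergyHyp

def shear : (Fin 3 → ℝ) →ₗ[ℝ] M3 where
  toFun a := outer a e3 + outer e3 a
  map_add' a b := by ext i j; simp only [outer, Pi.add_apply]; ring
  map_smul' c a := by
    ext i j; simp only [outer, Pi.add_apply, Pi.smul_apply, smul_eq_mul, RingHom.id_apply]; ring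

def ext23L : M2 →ₗ[ℝ] M3 where
  toFun := ext23
  map_add' G G' := by
    ext i j; by_cases hi : (i : ℕ) < 2 <;> by_cases hj : (j : ℕ) < 2 <;> simp [ext23, hi, hj]
  map_smul' c G := by
    ext i j; by_cases hi : (i : ℕ) < 2 <;> by_cases hj : (j : ℕ) < 2 <;> simp [ext23, hi, hj]

theorem Q2_eq_sInf (W : M3 → ℝ) (G : M2) :
    Q2 W G = sInf (Set.range fun a => Q3 W (ext23 G + shear a)) := by
  simp only [Q2, shear, LinearMap.coe_mk, AddHom.coe_mk, add_assoc]

theorem shear_symm (a : Fin 3 → ℝ) (i j : Fin 3) : shear a j i = shear a i j := by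
  simp only [shear, LinearMap.coe_mk, AddHom.coe_mk, Pi.add_apply, outer]
  ring

theorem ext23_symm {G : M2} (hG : ∀ i j, G j i = G i j) (i j : Fin 3) :
    ext23 G j i = ext23 G i j := by
  by_cases hi : (i : ℕ) < 2 <;> by_cases hj : (j : ℕ) < 2 <;> simp [ext23, hi, hj, hG]

theorem ext23_skew {G : M2} (hG : ∀ i j, G j i = -G i j) (i j : Fin 3) :
    ext23 G j i = -ext23 G i j := by
  by_cases hi : (i : ℕ) < 2 <;> by_cases hj : (j : ℕ) < 2 <;> simp [ext23, hi, hj]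
  exact hG _ _

theorem symM_ext23_add_shear (G : M2) (a : Fin 3 → ℝ) :
    symM (ext23 G + shear a) = ext23 (symM G) + shear a := by
  ext i j
  simp only [symM, Pi.add_apply, shear_symm a j i]
  by_cases hi : (i : ℕ) < 2 <;> by_cases hj : (j : ℕ) < 2 <;> simp [ext23, symM, hi, hj]
  ring

theorem ext23_add_shear_castSucc (G : M2) (a : Fin 3 → ℝ) (i j : Fin 2) :
    (ext23 G + shear a) i.castSucc j.castSucc = G i j := by
  have he3 : ∀ k : Fin 2, e3 k.castSucc = 0 := fun k => by fin_cases k <;> rfl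
  simp [ext23, shear, outer, he3, Fin.is_le]

theorem ext23_add_shear_ne_zero {G : M2} (hG : G ≠ 0) (a : Fin 3 → ℝ) :
    ext23 G + shear a ≠ 0 := fun h =>
  hG <| funext₂ fun i j => by rw [← ext23_add_shear_castSucc G a, h]; rfl

/-- properties of the quadratic forms Q₃ and Q₂. -/
theorem statement16 (W : M3 → ℝ) (hW : StoredEnergyHyp W) :
    -- Q₃ is a quadratic form
    (∃ B : M3 →ₗ[ℝ] M3 →ₗ[ℝ] ℝ, ∀ F, Q3 W F = B F F) ∧
    -- positive semi-definite
    (∀ F, 0 ≤ Q3 W F) ∧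
    -- vanishing on antisymmetric matrices
    (∀ F : M3, (∀ i j, F j i = -F i j) → Q3 W F = 0) ∧
    -- depending only on the symmetric part
    (∀ F, Q3 W F = Q3 W (symM F)) ∧
    -- positive definite on symmetric matrices
    (∀ F : M3, (∀ i j, F j i = F i j) → F ≠ 0 → 0 < Q3 W F) ∧
    -- Q₂ is a quadratic form
    (∃ B2 : M2 →ₗ[ℝ] M2 →ₗ[ℝ] ℝ, ∀ G, Q2 W G = B2 G G) ∧
    (∀ G, 0 ≤ Q2 W G) ∧
    (∀ G : M2, (∀ i j, G j i = -G i j) → Q2 W G = 0) ∧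
    (∀ G, Q2 W G = Q2 W (symM G)) ∧
    (∀ G : M2, (∀ i j, G j i = G i j) → G ≠ 0 → 0 < Q2 W G) := by
  obtain ⟨q, hq⟩ := (hessForm W).exists_linear_isLeast_add_range hW.hessForm_isSymm shear
    fun a => hW.hessForm_pos (shear_symm a)
  have hQ2 : ∀ G, Q2 W G = hessForm W (q (ext23 G)) (q (ext23 G)) := fun G => by
    simpa only [Q2_eq_sInf, Q3_eq_hessForm] using (hq (ext23 G)).2.csInf_eq
  refine ⟨⟨hessForm W, Q3_eq_hessForm W⟩,
    fun F => Q3_eq_hessForm W F ▸ hW.hessForm_nonneg F, fun F => hW.Q3_eq_zero_of_skew,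
    hW.Q3_symM, fun F hF hne => Q3_eq_hessForm W F ▸ hW.hessForm_pos hF hne,
    ⟨(hessForm W).compl₁₂ (q ∘ₗ ext23L) (q ∘ₗ ext23L), hQ2⟩,
    fun G => hQ2 G ▸ hW.hessForm_nonneg _, fun G hG => ?_, fun G => ?_, fun G hG hne => ?_⟩
  · have hle : hessForm W (q (ext23 G)) (q (ext23 G)) ≤
        hessForm W (ext23 G + shear 0) (ext23 G + shear 0) := (hq (ext23 G)).2.2 ⟨0, rfl⟩
    rw [map_zero, add_zero, ← Q3_eq_hessForm W (ext23 G),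
      hW.Q3_eq_zero_of_skew (ext23_skew hG)] at hle
    exact le_antisymm (hQ2 G ▸ hle) (hQ2 G ▸ hW.hessForm_nonneg _)
  · simp only [Q2_eq_sInf]
    congr with a
    rw [hW.Q3_symM, symM_ext23_add_shear]
  · obtain ⟨a, ha⟩ := (hq (ext23 G)).1
    rw [hQ2, ha]
    exact hW.hessForm_pos (fun i j => by simp only [Pi.add_apply, ext23_symm hG, shear_symm])
      (ext23_add_shear_ne_zero hne a)

end
end

section
/- Let μ > 0 and λ ∈ ℝ with 2μ + λ > 0, and let Q₃(F) = 2μ|sym F|² + λ(tr F)² for F ∈ ℝ^{3×3}. Then for every 2×2 matrix G, min_{a∈ℝ³} Q₃(Ĝ + a⊗e₃ + e₃⊗a) = 2μ|sym G|² + (2μλ/(2μ+λ))(tr G)², where Ĝ is G extended by zeros to a 3×3 matrix. -/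
open MeasureTheory Filter Matrix
open scoped Topology BigOperators

noncomputable section

/-! The perturbation `a ⊗ e₃ + e₃ ⊗ a` is symmetric and meets `Ĝ` in no entry, so
`|sym F|² = |sym G|² + 2 (a₀² + a₁²) + 4 a₂²` and `tr F = tr G + 2 a₂`. The shear components
`a₀, a₁` therefore only add energy, and what remains is the one-dimensional problem
`min_b 2μ b² + λ (tr G + b)²`, solved by completing the square: for `p + q > 0`,
`(p + q) (p b² + q (t + b)²) = ((p + q) b + q t)² + p q t²`. -/

theorem mul_sq_add_mul_sq_eq {p q : ℝ} (hpq : p + q ≠ 0) (t b : ℝ) :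
    p * b ^ 2 + q * (t + b) ^ 2 = p * q / (p + q) * t ^ 2 + ((p + q) * b + q * t) ^ 2 / (p + q) := by
  field_simp
  ring

theorem isLeast_range_mul_sq_add_mul_sq {p q : ℝ} (hpq : 0 < p + q) (t : ℝ) :
    IsLeast (Set.range fun b => p * b ^ 2 + q * (t + b) ^ 2) (p * q / (p + q) * t ^ 2) := by
  simp only [mul_sq_add_mul_sq_eq hpq.ne']
  constructor
  · refine ⟨-(q * t) / (p + q), ?_⟩
    field_simp
    ring
  · rintro _ ⟨b, rfl⟩
    have : 0 ≤ ((p + q) * b + q * t) ^ 2 / (p + q) := by positivity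
    linarith

theorem frobSq_symM_ext23_add_outer (G : M2) (a : Fin 3 → ℝ) :
    frobSq (symM (ext23 G + outer a e3 + outer e3 a))
      = frobSq (symM G) + 2 * (a 0 ^ 2 + a 1 ^ 2) + 4 * a 2 ^ 2 := by
  simp only [frobSq, symM, Pi.add_apply, ext23, outer, e3, Fin.sum_univ_three, Fin.sum_univ_two,
    Fin.isValue, Fin.coe_ofNat_eq_mod, Nat.zero_mod, Nat.one_mod, Nat.mod_succ, Order.lt_two_iff,
    zero_le, Std.le_refl, Nat.not_ofNat_le_one, ↓reduceDIte, Fin.zero_eta, Fin.mk_one,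
    cons_val_zero, cons_val_one, cons_val]
  ring

theorem trace_ext23_add_outer (G : M2) (a : Fin 3 → ℝ) :
    ∑ i, (ext23 G + outer a e3 + outer e3 a) i i = ∑ i, G i i + 2 * a 2 := by
  simp only [Pi.add_apply, ext23, outer, e3, Fin.sum_univ_three, Fin.sum_univ_two,
    Fin.isValue, Fin.coe_ofNat_eq_mod, Nat.zero_mod, Nat.one_mod, Nat.mod_succ, Order.lt_two_iff,
    zero_le, Std.le_refl, Nat.not_ofNat_le_one, ↓reduceDIte, Fin.zero_eta, Fin.mk_one,
    cons_val_zero, cons_val_one, cons_val]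
  ring

/-- the relaxed quadratic form in the isotropic case. -/
theorem statement17 (μ lam : ℝ) (hμ : 0 < μ) (hlam : 0 < 2 * μ + lam) :
    ∀ G : M2,
      IsLeast (Set.range fun a : Fin 3 → ℝ =>
          2 * μ * frobSq (symM (ext23 G + outer a e3 + outer e3 a))
            + lam * (∑ i, (ext23 G + outer a e3 + outer e3 a) i i) ^ 2)
        (2 * μ * frobSq (symM G) + (2 * μ * lam / (2 * μ + lam)) * (∑ i, G i i) ^ 2) := by
  intro G
  set t := ∑ i, G i i
  have energy : ∀ a : Fin 3 → ℝ,
      2 * μ * frobSq (symM (ext23 G + outer a e3 + outer e3 a))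
          + lam * (∑ i, (ext23 G + outer a e3 + outer e3 a) i i) ^ 2
        = 2 * μ * frobSq (symM G) + 4 * μ * (a 0 ^ 2 + a 1 ^ 2)
          + (2 * μ * (2 * a 2) ^ 2 + lam * (t + 2 * a 2) ^ 2) := by
    intro a
    rw [frobSq_symM_ext23_add_outer, trace_ext23_add_outer]
    ring
  obtain ⟨⟨b, hb⟩, hmin⟩ := isLeast_range_mul_sq_add_mul_sq hlam t
  dsimp only at hb
  constructor
  · refine ⟨![0, 0, b / 2], ?_⟩
    simp only [energy, cons_val_zero, cons_val_one, cons_val_two, head_cons, tail_cons]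
    rw [mul_div_cancel₀ b two_ne_zero, hb]
    ring
  · rintro _ ⟨a, rfl⟩
    have hle : _ ≤ 2 * μ * (2 * a 2) ^ 2 + lam * (t + 2 * a 2) ^ 2 := hmin ⟨2 * a 2, rfl⟩
    dsimp only
    rw [energy]
    have hshear : 0 ≤ 4 * μ * (a 0 ^ 2 + a 1 ^ 2) := by positivity
    linarith
end
end
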